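/- arXiv:2405.20957 — 3 statements merged into one kernel-verified Lean document; each statement's English description precedes it below -/
import Mathlib

section
/- Let s be a real number, v a vector in ℝⁿ, K″ an n×n real symmetric matrix such that the (n+1)×(n+1) block matrix [[s, vᵀ], [v, K″]] is positive semidefinite, K′ an n×n real symmetric positive semidefinite matrix, σ² > 0, and ρ a real number with ρ² ≤ 1. Then the matrix Σ = K″ + (1−ρ²)·K′ + σ²·I is invertible and s − ρ²·vᵀΣ⁻¹v ≥ (1−ρ²)·s. -/
/-!
Put `w = Σ⁻¹ v`, so that `vᵀΣ⁻¹v = vᵀw = wᵀΣw ≥ 0`. Cauchy–Schwarz for the positive semidefinite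
block matrix gives `(vᵀw)² ≤ s · wᵀK″w`, and `Σ - K″ = (1−ρ²)K′ + σ²I ⪰ 0` gives
`wᵀK″w ≤ wᵀΣw = vᵀw`. Hence `(vᵀw)² ≤ s · vᵀw`, i.e. `vᵀΣ⁻¹v ≤ s`, and multiplying by `ρ² ≥ 0`
yields the bound.
-/

open Matrix

namespace Matrix

variable {m n : Type*} [Fintype m] [Fintype n]

theorem PosSemidef.dotProduct_mulVec_sq_le {M : Matrix n n ℝ} (hM : M.PosSemidef) (x y : n → ℝ) :
    (x ⬝ᵥ M *ᵥ y) ^ 2 ≤ (x ⬝ᵥ M *ᵥ x) * (y ⬝ᵥ M *ᵥ y) := by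
  let := M.toSeminormedAddCommGroup hM
  let := M.toInnerProductSpace hM
  have h := real_inner_mul_inner_self_le x y
  change (M *ᵥ y) ⬝ᵥ x * ((M *ᵥ y) ⬝ᵥ x) ≤ (M *ᵥ x) ⬝ᵥ x * ((M *ᵥ y) ⬝ᵥ y) at h
  simp only [dotProduct_comm _ x, dotProduct_comm _ y] at h
  nlinarith

theorem PosSemidef.fromBlocks_dotProduct_mulVec_sq_le {A : Matrix m m ℝ} {B : Matrix m n ℝ}
    {C : Matrix n m ℝ} {D : Matrix n n ℝ} (h : (fromBlocks A B C D).PosSemidef)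
    (x : m → ℝ) (y : n → ℝ) :
    (x ⬝ᵥ B *ᵥ y) ^ 2 ≤ (x ⬝ᵥ A *ᵥ x) * (y ⬝ᵥ D *ᵥ y) := by
  simpa [fromBlocks_mulVec] using h.dotProduct_mulVec_sq_le (Sum.elim x 0) (Sum.elim 0 y)

theorem PosDef.dotProduct_inv_mulVec_le [DecidableEq n] {S D : Matrix n n ℝ} (hS : S.PosDef)
    (hSD : (S - D).PosSemidef) {a : ℝ} (ha : 0 ≤ a) {b : n → ℝ}
    (hb : ∀ y, (b ⬝ᵥ y) ^ 2 ≤ a * (y ⬝ᵥ D *ᵥ y)) :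
    b ⬝ᵥ S⁻¹ *ᵥ b ≤ a := by
  set w := S⁻¹ *ᵥ b
  have hbw : b ⬝ᵥ w = w ⬝ᵥ S *ᵥ w := by
    rw [mulVec_mulVec, mul_nonsing_inv _ hS.det_pos.ne'.isUnit, one_mulVec, dotProduct_comm]
  have hSw : 0 ≤ w ⬝ᵥ S *ᵥ w := by simpa using hS.posSemidef.dotProduct_mulVec_nonneg w
  have hDw : w ⬝ᵥ D *ᵥ w ≤ w ⬝ᵥ S *ᵥ w := by
    simpa [sub_mulVec, dotProduct_sub] using hSD.dotProduct_mulVec_nonneg w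
  have hsq := hb w
  rw [hbw] at hsq ⊢
  nlinarith [mul_le_mul_of_nonneg_left hDw ha]

end Matrix

theorem variance_shrinkage_bound_general {n : ℕ} (s : ℝ) (v : Fin n → ℝ)
    (K'' K' : Matrix (Fin n) (Fin n) ℝ)
    (hblock : (Matrix.fromBlocks !![s] (Matrix.of fun _ j => v j)
        (Matrix.of fun i _ => v i) K'').PosSemidef)
    (hK' : K'.PosSemidef)
    (σ2 : ℝ) (hσ2 : 0 < σ2) (ρ : ℝ) (hρ : ρ ^ 2 ≤ 1) :
    IsUnit (K'' + (1 - ρ ^ 2) • K' + σ2 • (1 : Matrix (Fin n) (Fin n) ℝ)).det ∧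
      (1 - ρ ^ 2) * s ≤
        s - ρ ^ 2 *
          (v ⬝ᵥ ((K'' + (1 - ρ ^ 2) • K' + σ2 • (1 : Matrix (Fin n) (Fin n) ℝ))⁻¹ *ᵥ v)) := by
  have hs : 0 ≤ s := by simpa using hblock.diag_nonneg (i := Sum.inl 0)
  have hK'' : K''.PosSemidef := hblock.submatrix Sum.inr
  have hnoise : ((1 - ρ ^ 2) • K' + σ2 • (1 : Matrix (Fin n) (Fin n) ℝ)).PosDef :=
    PosDef.posSemidef_add (hK'.smul (by linarith)) (PosDef.one.smul hσ2)
  have hcov : (K'' + (1 - ρ ^ 2) • K' + σ2 • (1 : Matrix (Fin n) (Fin n) ℝ)).PosDef := by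
    simpa only [add_assoc] using PosDef.posSemidef_add hK'' hnoise
  refine ⟨hcov.det_pos.ne'.isUnit, ?_⟩
  have hv : v ⬝ᵥ _ ≤ s := hcov.dotProduct_inv_mulVec_le (D := K'')
    (by rw [add_assoc, add_sub_cancel_left]; exact hnoise.posSemidef) hs
    fun y => by simpa [mulVec, dotProduct] using
      hblock.fromBlocks_dotProduct_mulVec_sq_le (fun _ => 1) y
  nlinarith [mul_le_mul_of_nonneg_left hv (sq_nonneg ρ)]

/-- Matrix form of Proposition 3.1: the observational data can shrink the
experimental posterior variance by at most a factor `1 − ρ²`.  If the block matrix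
`[[s, vᵀ], [v, K″]]` is positive semidefinite (with `K″` symmetric), `K′` is
symmetric positive semidefinite, `σ² > 0` and `ρ² ≤ 1`, then
`Σ = K″ + (1−ρ²)·K′ + σ²·I` is invertible and `s − ρ²·vᵀΣ⁻¹v ≥ (1−ρ²)·s`. -/
theorem variance_shrinkage_bound {n : ℕ} (s : ℝ) (v : Fin n → ℝ)
    (K'' K' : Matrix (Fin n) (Fin n) ℝ) (hK'' : K''ᵀ = K'')
    (hblock : (Matrix.fromBlocks !![s] (Matrix.of fun _ j => v j)
        (Matrix.of fun i _ => v i) K'').PosSemidef)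
    (hK' : K'.PosSemidef)
    (σ2 : ℝ) (hσ2 : 0 < σ2) (ρ : ℝ) (hρ : ρ ^ 2 ≤ 1) :
    IsUnit (K'' + (1 - ρ ^ 2) • K' + σ2 • (1 : Matrix (Fin n) (Fin n) ℝ)).det ∧
      (1 - ρ ^ 2) * s ≤
        s - ρ ^ 2 *
          (v ⬝ᵥ ((K'' + (1 - ρ ^ 2) • K' + σ2 • (1 : Matrix (Fin n) (Fin n) ℝ))⁻¹ *ᵥ v)) :=
  variance_shrinkage_bound_general s v K'' K' hblock hK' σ2 hσ2 ρ hρ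
end

section
/- Let (Ω, P) be a probability space carrying integrable real random variables Y¹ and Y⁰ (the potential outcomes), a treatment indicator A taking values in {0,1}, a trial-participation indicator S (S = e denotes the event of participation in the RCT), and covariates X_τ and X_S taking values in finite types, with the observed outcome Y = Y¹ on {A = 1} and Y = Y⁰ on {A = 0} (consistency). Fix a value t of X_τ with P(X_τ = t) > 0, and assume: (positivity) for every value s of X_S with P(X_τ = t, X_S = s) > 0, the events {A = a, X_τ = t, X_S = s, S = e} have positive probability for a = 0 and a = 1; (trial exchangeability) E[Y¹ − Y⁰ | X_τ = t, X_S = s] = E[Y¹ − Y⁰ | X_τ = t, X_S = s, S = e] for every such s; (treatment exchangeability in the trial) E[Yᵃ | X_τ = t, X_S = s, S = e] = E[Yᵃ | A = a, X_τ = t, X_S = s, S = e] for a = 0,1 and every such s; (randomization) P(X_S = s | A = a, X_τ = t, S = e) = P(X_S = s | X_τ = t, S = e) for a = 0,1 and every s; and (selection invariance) P(X_S = s | X_τ = t) = P(X_S = s | X_τ = t, S = e) for every s. Then E[Y¹ − Y⁰ | X_τ = t] = E[Y | A = 1, X_τ = t, S = e] − E[Y | A = 0, X_τ = t, S = e]. 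-/
/-!
Stratify by `X_S`. Given `X_τ = t`, the CATE is the `P(X_S = s | X_τ = t)`-weighted average of
the stratum effects `E[Y¹ − Y⁰ | X_τ = t, X_S = s]`. Trial exchangeability moves each stratum
effect into the trial, and treatment exchangeability together with consistency turns it into
`E[Y | A = 1, …] − E[Y | A = 0, …]`. Likewise each arm mean `E[Y | A = a, X_τ = t, S = e]` is
an average of its stratum means, with weights `P(X_S = s | A = a, X_τ = t, S = e)`; by
randomization and selection invariance these are the target weights `P(X_S = s | X_τ = t)`.
-/

open MeasureTheory ProbabilityTheory

namespace MeasureTheory.Integrable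

variable {Ω : Type*} [MeasurableSpace Ω] {μ : Measure Ω} {f : Ω → ℝ}

theorem cond (hf : Integrable f μ) (s : Set Ω) : Integrable f μ[|s] := by
  rcases eq_or_ne (μ s) 0 with hs | hs
  · rw [cond_eq_zero_of_meas_eq_zero hs]
    exact integrable_zero_measure
  · exact hf.restrict.smul_measure (ENNReal.inv_ne_top.mpr hs)

end MeasureTheory.Integrable

namespace ProbabilityTheory

variable {Ω α : Type*} [MeasurableSpace Ω] [Fintype α] [MeasurableSpace α]
  [MeasurableSingletonClass α] {X : Ω → α} {f : Ω → ℝ}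

theorem integral_eq_sum_fiber_mul_integral_cond (hX : Measurable X) (ν : Measure Ω)
    [IsFiniteMeasure ν] (hf : Integrable f ν) :
    ∫ ω, f ω ∂ν = ∑ x, (ν (X ⁻¹' {x})).toReal * ∫ ω, f ω ∂ν[|X ⁻¹' {x}] := by
  conv_lhs => rw [← sum_meas_smul_cond_fiber hX ν]
  rw [integral_finsetSum_measure fun x _ ↦ (hf.cond _).smul_measure (measure_ne_top _ _)]
  simp_rw [integral_smul_measure, smul_eq_mul]

theorem integral_cond_eq_sum_fiber_mul_integral_cond_inter (hX : Measurable X)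
    (μ : Measure Ω) [IsFiniteMeasure μ] (hf : Integrable f μ) {B : Set Ω} (hB : MeasurableSet B) :
    ∫ ω, f ω ∂μ[|B] =
      ∑ x, (μ[|B] (X ⁻¹' {x})).toReal * ∫ ω, f ω ∂μ[|B ∩ X ⁻¹' {x}] := by
  rw [integral_eq_sum_fiber_mul_integral_cond hX _ (hf.cond B)]
  simp_rw [cond_cond_eq_cond_inter hB (hX (measurableSet_singleton _))]

theorem integral_cond_congr {s : Set Ω} (μ : Measure Ω) (hs : MeasurableSet s) {g : Ω → ℝ}
    (hfg : ∀ ω ∈ s, f ω = g ω) : ∫ ω, f ω ∂μ[|s] = ∫ ω, g ω ∂μ[|s] :=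
  integral_congr_ae (ae_cond_of_forall_mem hs hfg)

end ProbabilityTheory

theorem integral_cond_arm_eq_sum_strata {Ω T Sc : Type*} [MeasurableSpace Ω]
    [MeasurableSpace T] [MeasurableSingletonClass T] [Fintype Sc] [MeasurableSpace Sc]
    [MeasurableSingletonClass Sc]
    (μ : Measure Ω) [IsFiniteMeasure μ] {Y Ya : Ω → ℝ} {A S : Ω → Bool} {XT : Ω → T}
    {XS : Ω → Sc} (hA : Measurable A) (hS : Measurable S) (hXT : Measurable XT)
    (hXS : Measurable XS) (hYa : Integrable Ya μ) {a : Bool} (hcons : ∀ ω, A ω = a → Y ω = Ya ω)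
    (t : T) :
    ∫ ω, Y ω ∂μ[|{ω | A ω = a ∧ XT ω = t ∧ S ω = true}] =
      ∑ s, (μ[|{ω | A ω = a ∧ XT ω = t ∧ S ω = true}] {ω | XS ω = s}).toReal *
        ∫ ω, Ya ω ∂μ[|{ω | A ω = a ∧ XT ω = t ∧ XS ω = s ∧ S ω = true}] := by
  have hB : MeasurableSet {ω | A ω = a ∧ XT ω = t ∧ S ω = true} :=
    (hA (measurableSet_singleton a)).inter
      ((hXT (measurableSet_singleton t)).inter (hS (measurableSet_singleton true)))
  rw [integral_cond_congr μ hB fun ω hω ↦ hcons ω hω.1,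
    integral_cond_eq_sum_fiber_mul_integral_cond_inter hXS μ hYa hB]
  refine Finset.sum_congr rfl fun s _ ↦ congrArg (_ * ∫ ω, Ya ω ∂μ[|·]) ?_
  ext ω
  simp only [Set.mem_inter_iff, Set.mem_preimage, Set.mem_singleton_iff, Set.mem_ofPred_eq]
  tauto

theorem cate_identification_general
    {Ω : Type*} [MeasurableSpace Ω] (μ : Measure Ω) [IsProbabilityMeasure μ]
    {T Sc : Type*} [MeasurableSpace T] [MeasurableSingletonClass T]
    [Fintype Sc] [MeasurableSpace Sc] [MeasurableSingletonClass Sc]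
    (Y1 Y0 Y : Ω → ℝ) (A : Ω → Bool) (S : Ω → Bool) (XT : Ω → T) (XS : Ω → Sc)
    (hY1 : Integrable Y1 μ) (hY0 : Integrable Y0 μ)
    (hA : Measurable A) (hS : Measurable S) (hXT : Measurable XT) (hXS : Measurable XS)
    -- consistency: the observed outcome agrees with the potential outcome of the
    -- received treatment
    (hcons : ∀ ω, (A ω = true → Y ω = Y1 ω) ∧ (A ω = false → Y ω = Y0 ω))
    (t : T)
    -- trial exchangeability
    (hexchS : ∀ s : Sc, 0 < μ {ω | XT ω = t ∧ XS ω = s} →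
      ∫ ω, (Y1 ω - Y0 ω) ∂(μ[|{ω | XT ω = t ∧ XS ω = s}]) =
      ∫ ω, (Y1 ω - Y0 ω) ∂(μ[|{ω | XT ω = t ∧ XS ω = s ∧ S ω = true}]))
    -- treatment exchangeability in the trial
    (hexchA1 : ∀ s : Sc, 0 < μ {ω | XT ω = t ∧ XS ω = s} →
      ∫ ω, Y1 ω ∂(μ[|{ω | XT ω = t ∧ XS ω = s ∧ S ω = true}]) =
      ∫ ω, Y1 ω ∂(μ[|{ω | A ω = true ∧ XT ω = t ∧ XS ω = s ∧ S ω = true}]))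
    (hexchA0 : ∀ s : Sc, 0 < μ {ω | XT ω = t ∧ XS ω = s} →
      ∫ ω, Y0 ω ∂(μ[|{ω | XT ω = t ∧ XS ω = s ∧ S ω = true}]) =
      ∫ ω, Y0 ω ∂(μ[|{ω | A ω = false ∧ XT ω = t ∧ XS ω = s ∧ S ω = true}]))
    -- randomization: X_S ⟂ A within the trial, given X_τ = t
    (hrand : ∀ s : Sc, ∀ a : Bool,
      (μ[|{ω | A ω = a ∧ XT ω = t ∧ S ω = true}]) {ω | XS ω = s} =
      (μ[|{ω | XT ω = t ∧ S ω = true}]) {ω | XS ω = s})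
    -- selection invariance
    (hselinv : ∀ s : Sc,
      (μ[|{ω | XT ω = t}]) {ω | XS ω = s} =
      (μ[|{ω | XT ω = t ∧ S ω = true}]) {ω | XS ω = s}) :
    ∫ ω, (Y1 ω - Y0 ω) ∂(μ[|{ω | XT ω = t}]) =
      (∫ ω, Y ω ∂(μ[|{ω | A ω = true ∧ XT ω = t ∧ S ω = true}])) -
      (∫ ω, Y ω ∂(μ[|{ω | A ω = false ∧ XT ω = t ∧ S ω = true}])) := by
  have hT : MeasurableSet {ω | XT ω = t} := hXT (measurableSet_singleton t)
  have hstratum : ∀ s, (μ[|{ω | XT ω = t}] {ω | XS ω = s}).toReal *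
        ∫ ω, (Y1 ω - Y0 ω) ∂μ[|{ω | XT ω = t ∧ XS ω = s}] =
      (μ[|{ω | XT ω = t}] {ω | XS ω = s}).toReal *
          ∫ ω, Y1 ω ∂μ[|{ω | A ω = true ∧ XT ω = t ∧ XS ω = s ∧ S ω = true}] -
        (μ[|{ω | XT ω = t}] {ω | XS ω = s}).toReal *
          ∫ ω, Y0 ω ∂μ[|{ω | A ω = false ∧ XT ω = t ∧ XS ω = s ∧ S ω = true}] := by
    intro s
    rcases eq_or_ne (μ[|{ω | XT ω = t}] {ω | XS ω = s}) 0 with hw | hw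
    · simp [hw]
    have hpos := inter_pos_of_cond_ne_zero hT hw
    rw [hexchS s hpos, integral_sub (hY1.cond _) (hY0.cond _), hexchA1 s hpos,
      hexchA0 s hpos, mul_sub]
  rw [integral_cond_eq_sum_fiber_mul_integral_cond_inter (f := fun ω ↦ Y1 ω - Y0 ω) hXS μ
      (hY1.sub hY0) hT,
    integral_cond_arm_eq_sum_strata μ hA hS hXT hXS hY1 (fun ω ↦ (hcons ω).1),
    integral_cond_arm_eq_sum_strata μ hA hS hXT hXS hY0 (fun ω ↦ (hcons ω).2)]
  simp_rw [hrand, ← hselinv, ← Finset.sum_sub_distrib]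
  exact Finset.sum_congr rfl fun s _ ↦ hstratum s

/-- Identification of the CATE in the target population from the RCT data:
under consistency, positivity, trial exchangeability, treatment exchangeability
in the trial, randomization of treatment, and selection invariance,
`E[Y¹ − Y⁰ | X_τ = t] = E[Y | A = 1, X_τ = t, S = e] − E[Y | A = 0, X_τ = t, S = e]`. -/
theorem cate_identification
    {Ω : Type*} [MeasurableSpace Ω] (μ : Measure Ω) [IsProbabilityMeasure μ]
    {T Sc : Type*} [Fintype T] [MeasurableSpace T] [MeasurableSingletonClass T]
    [Fintype Sc] [MeasurableSpace Sc] [MeasurableSingletonClass Sc]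
    (Y1 Y0 Y : Ω → ℝ) (A : Ω → Bool) (S : Ω → Bool) (XT : Ω → T) (XS : Ω → Sc)
    (hY1 : Integrable Y1 μ) (hY0 : Integrable Y0 μ)
    (hA : Measurable A) (hS : Measurable S) (hXT : Measurable XT) (hXS : Measurable XS)
    -- consistency: the observed outcome agrees with the potential outcome of the
    -- received treatment
    (hcons : ∀ ω, (A ω = true → Y ω = Y1 ω) ∧ (A ω = false → Y ω = Y0 ω))
    (t : T) (ht : 0 < μ {ω | XT ω = t})
    -- positivity
    (hpos : ∀ s : Sc, 0 < μ {ω | XT ω = t ∧ XS ω = s} →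
      0 < μ {ω | A ω = false ∧ XT ω = t ∧ XS ω = s ∧ S ω = true} ∧
      0 < μ {ω | A ω = true ∧ XT ω = t ∧ XS ω = s ∧ S ω = true})
    -- trial exchangeability
    (hexchS : ∀ s : Sc, 0 < μ {ω | XT ω = t ∧ XS ω = s} →
      ∫ ω, (Y1 ω - Y0 ω) ∂(μ[|{ω | XT ω = t ∧ XS ω = s}]) =
      ∫ ω, (Y1 ω - Y0 ω) ∂(μ[|{ω | XT ω = t ∧ XS ω = s ∧ S ω = true}]))
    -- treatment exchangeability in the trial
    (hexchA1 : ∀ s : Sc, 0 < μ {ω | XT ω = t ∧ XS ω = s} →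
      ∫ ω, Y1 ω ∂(μ[|{ω | XT ω = t ∧ XS ω = s ∧ S ω = true}]) =
      ∫ ω, Y1 ω ∂(μ[|{ω | A ω = true ∧ XT ω = t ∧ XS ω = s ∧ S ω = true}]))
    (hexchA0 : ∀ s : Sc, 0 < μ {ω | XT ω = t ∧ XS ω = s} →
      ∫ ω, Y0 ω ∂(μ[|{ω | XT ω = t ∧ XS ω = s ∧ S ω = true}]) =
      ∫ ω, Y0 ω ∂(μ[|{ω | A ω = false ∧ XT ω = t ∧ XS ω = s ∧ S ω = true}]))
    -- randomization: X_S ⟂ A within the trial, given X_τ = t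
    (hrand : ∀ s : Sc, ∀ a : Bool,
      (μ[|{ω | A ω = a ∧ XT ω = t ∧ S ω = true}]) {ω | XS ω = s} =
      (μ[|{ω | XT ω = t ∧ S ω = true}]) {ω | XS ω = s})
    -- selection invariance
    (hselinv : ∀ s : Sc,
      (μ[|{ω | XT ω = t}]) {ω | XS ω = s} =
      (μ[|{ω | XT ω = t ∧ S ω = true}]) {ω | XS ω = s}) :
    ∫ ω, (Y1 ω - Y0 ω) ∂(μ[|{ω | XT ω = t}]) =
      (∫ ω, Y ω ∂(μ[|{ω | A ω = true ∧ XT ω = t ∧ S ω = true}])) -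
      (∫ ω, Y ω ∂(μ[|{ω | A ω = false ∧ XT ω = t ∧ S ω = true}])) :=
  cate_identification_general μ Y1 Y0 Y A S XT XS hY1 hY0 hA hS hXT hXS hcons t hexchS hexchA1
    hexchA0 hrand hselinv
end

section
/- Let (Ω, P) be a probability space carrying integrable real random variables Y¹ and Y⁰ (the potential outcomes), a trial-participation indicator S (S = e denotes participation in the RCT), and covariates X_τ and X_S taking values in finite types. Fix a value t of X_τ with P(X_τ = t) > 0, and assume: (positivity) for every value s of X_S with P(X_τ = t, X_S = s) > 0 one has P(X_τ = t, X_S = s, S = e) > 0; (trial exchangeability) E[Y¹ − Y⁰ | X_τ = t, X_S = s] = E[Y¹ − Y⁰ | X_τ = t, X_S = s, S = e] for every such s; and (selection invariance) P(X_S = s | X_τ = t) = P(X_S = s | X_τ = t, S = e) for every s. Then E[Y¹ − Y⁰ | X_τ = t] = Σ_s P(X_S = s | X_τ = t, S = e) · E[Y¹ − Y⁰ | X_τ = t, X_S = s, S = e], where the sum ranges over values s with P(X_τ = t, X_S = s) > 0. -/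
/-!
Given `X_τ = t`, the law of total expectation along the finitely many values of `X_S` writes the
CATE as the average of the stratum CATEs weighted by `P(X_S = s | X_τ = t)`; trial exchangeability
and selection invariance replace each stratum CATE and each weight by its trial counterpart.
Null strata carry zero weight, so the sum may be restricted to strata of positive probability.
-/

open MeasureTheory ProbabilityTheory

section

variable {Ω α : Type*} [MeasurableSpace Ω] {μ : Measure Ω} {f : Ω → ℝ}

theorem MeasureTheory.Integrable.cond_s10 (hf : Integrable f μ) (s : Set Ω) : Integrable f μ[|s] := by
  by_cases hs : μ s = 0
  · simp [cond_eq_zero_of_meas_eq_zero hs]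
  · exact hf.restrict.smul_measure (ENNReal.inv_ne_top.2 hs)

namespace ProbabilityTheory

variable [Fintype α] [MeasurableSpace α] [DiscreteMeasurableSpace α] {X : Ω → α}

theorem integral_eq_sum_mul_integral_cond_fiber [IsFiniteMeasure μ] (hX : Measurable X)
    (hf : Integrable f μ) :
    ∫ ω, f ω ∂μ = ∑ x, (μ (X ⁻¹' {x})).toReal * ∫ ω, f ω ∂μ[|X ⁻¹' {x}] := by
  have hμ := sum_meas_smul_cond_fiber hX μ
  have hint : ∀ x ∈ Finset.univ, Integrable f (μ (X ⁻¹' {x}) • μ[|X ⁻¹' {x}]) :=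
    integrable_finsetSum_measure.1 (by rwa [hμ])
  conv_lhs => rw [← hμ]
  simp only [integral_finsetSum_measure hint, integral_smul_measure, smul_eq_mul]

theorem integral_cond_eq_sum_mul_integral_cond_inter_fiber [IsFiniteMeasure μ] {s : Set Ω}
    (hs : MeasurableSet s) (hX : Measurable X) (hf : Integrable f μ) :
    ∫ ω, f ω ∂μ[|s] = ∑ x ∈ Finset.univ.filter (fun x => 0 < μ (s ∩ X ⁻¹' {x})),
      (μ[X ⁻¹' {x} | s]).toReal * ∫ ω, f ω ∂μ[|s ∩ X ⁻¹' {x}] := by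
  rw [integral_eq_sum_mul_integral_cond_fiber hX (hf.cond_s10 s), Finset.sum_filter_of_ne]
  · simp only [cond_cond_eq_cond_inter hs (hX (.singleton _))]
  · intro x _ hx
    exact inter_pos_of_cond_ne_zero hs (ENNReal.toReal_ne_zero.1 (left_ne_zero_of_mul hx)).1

end ProbabilityTheory

end

theorem cate_averaging_general
    {Ω : Type*} [MeasurableSpace Ω] (μ : Measure Ω) [IsProbabilityMeasure μ]
    {T Sc : Type*} [MeasurableSpace T] [MeasurableSingletonClass T]
    [Fintype Sc] [MeasurableSpace Sc] [MeasurableSingletonClass Sc]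
    (Y1 Y0 : Ω → ℝ) (S : Ω → Bool) (XT : Ω → T) (XS : Ω → Sc)
    (hY1 : Integrable Y1 μ) (hY0 : Integrable Y0 μ)
    (hXT : Measurable XT) (hXS : Measurable XS)
    (t : T)
    -- trial exchangeability
    (hexch : ∀ s : Sc, 0 < μ {ω | XT ω = t ∧ XS ω = s} →
      ∫ ω, (Y1 ω - Y0 ω) ∂(μ[|{ω | XT ω = t ∧ XS ω = s}]) =
      ∫ ω, (Y1 ω - Y0 ω) ∂(μ[|{ω | XT ω = t ∧ XS ω = s ∧ S ω = true}]))
    -- selection invariance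
    (hselinv : ∀ s : Sc,
      (μ[|{ω | XT ω = t}]) {ω | XS ω = s} =
      (μ[|{ω | XT ω = t ∧ S ω = true}]) {ω | XS ω = s}) :
    ∫ ω, (Y1 ω - Y0 ω) ∂(μ[|{ω | XT ω = t}]) =
      ∑ s ∈ Finset.univ.filter (fun s : Sc => 0 < μ {ω | XT ω = t ∧ XS ω = s}),
        ((μ[|{ω | XT ω = t ∧ S ω = true}]) {ω | XS ω = s}).toReal *
          ∫ ω, (Y1 ω - Y0 ω) ∂(μ[|{ω | XT ω = t ∧ XS ω = s ∧ S ω = true}]) := by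
  calc ∫ ω, (Y1 ω - Y0 ω) ∂(μ[|{ω | XT ω = t}])
      = ∑ s ∈ Finset.univ.filter (fun s : Sc => 0 < μ {ω | XT ω = t ∧ XS ω = s}),
          ((μ[|{ω | XT ω = t}]) {ω | XS ω = s}).toReal *
            ∫ ω, (Y1 ω - Y0 ω) ∂(μ[|{ω | XT ω = t ∧ XS ω = s}]) :=
        integral_cond_eq_sum_mul_integral_cond_inter_fiber (hXT (.singleton t)) hXS (hY1.sub hY0)
    _ = _ := Finset.sum_congr rfl fun s hs => by
        rw [hselinv s, hexch s (Finset.mem_filter.1 hs).2]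

/-- Averaging the within-trial CATE over the conditional distribution of the
selection covariates `X_S` given `X_τ = t` in the RCT recovers the CATE in the
target population. -/
theorem cate_averaging
    {Ω : Type*} [MeasurableSpace Ω] (μ : Measure Ω) [IsProbabilityMeasure μ]
    {T Sc : Type*} [Fintype T] [MeasurableSpace T] [MeasurableSingletonClass T]
    [Fintype Sc] [MeasurableSpace Sc] [MeasurableSingletonClass Sc]
    (Y1 Y0 : Ω → ℝ) (S : Ω → Bool) (XT : Ω → T) (XS : Ω → Sc)
    (hY1 : Integrable Y1 μ) (hY0 : Integrable Y0 μ)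
    (hS : Measurable S) (hXT : Measurable XT) (hXS : Measurable XS)
    (t : T) (ht : 0 < μ {ω | XT ω = t})
    -- positivity
    (hpos : ∀ s : Sc, 0 < μ {ω | XT ω = t ∧ XS ω = s} →
      0 < μ {ω | XT ω = t ∧ XS ω = s ∧ S ω = true})
    -- trial exchangeability
    (hexch : ∀ s : Sc, 0 < μ {ω | XT ω = t ∧ XS ω = s} →
      ∫ ω, (Y1 ω - Y0 ω) ∂(μ[|{ω | XT ω = t ∧ XS ω = s}]) =
      ∫ ω, (Y1 ω - Y0 ω) ∂(μ[|{ω | XT ω = t ∧ XS ω = s ∧ S ω = true}]))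
    -- selection invariance
    (hselinv : ∀ s : Sc,
      (μ[|{ω | XT ω = t}]) {ω | XS ω = s} =
      (μ[|{ω | XT ω = t ∧ S ω = true}]) {ω | XS ω = s}) :
    ∫ ω, (Y1 ω - Y0 ω) ∂(μ[|{ω | XT ω = t}]) =
      ∑ s ∈ Finset.univ.filter (fun s : Sc => 0 < μ {ω | XT ω = t ∧ XS ω = s}),
        ((μ[|{ω | XT ω = t ∧ S ω = true}]) {ω | XS ω = s}).toReal *
          ∫ ω, (Y1 ω - Y0 ω) ∂(μ[|{ω | XT ω = t ∧ XS ω = s ∧ S ω = true}]) :=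
  cate_averaging_general μ Y1 Y0 S XT XS hY1 hY0 hXT hXS t hexch hselinv
end
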